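/- arXiv:2104.01710 — 2 statements merged into one kernel-verified Lean document; each statement's English description precedes it below -/
import Mathlib

section
/- The function g(t) = ∫₀^{π/2} arccos((t - tan²x)/(t + tan²x)) dx is differentiable on (0,1) with derivative g'(t) = log t / (2√t(1 - t)). -/
open Real MeasureTheory

/-!
Differentiate under the integral sign: `∂ₛ arccos ((s - a²)/(s + a²)) = -|a| / (√s (s + a²))`,
which by AM–GM is at most `1/(2s)` in absolute value, hence dominated uniformly in `x` for `s`
near `t`. At `s = t` the integrand becomes `-(tan x / (t + tan² x)) / √t`, and
`tan x / (t + tan² x) = sin x cos x / (t cos² x + sin² x)` has the antiderivative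
`log (t cos² x + sin² x) / (2 (1 - t))`.
-/

lemma Real.measurable_tan : Measurable tan := by
  rw [show tan = fun x => sin x / cos x from funext tan_eq_sin_div_cos]
  fun_prop

/-- At `a = 0` the function is locally constant; allowing it covers Lean's `tan (π / 2) = 0`. -/
lemma hasDerivAt_arccos_sub_sq_div_add_sq {s : ℝ} (hs : 0 < s) (a : ℝ) :
    HasDerivAt (fun s => arccos ((s - a ^ 2) / (s + a ^ 2))) (-|a| / (√s * (s + a ^ 2))) s := by
  rcases eq_or_ne a 0 with rfl | ha
  · refine (hasDerivAt_const s 0).congr_of_eventuallyEq ?_ |>.congr_deriv (by simp)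
    filter_upwards [Ioi_mem_nhds hs] with r hr
    simp [div_self (ne_of_gt (Set.mem_Ioi.1 hr))]
  have hsa : 0 < s + a ^ 2 := by positivity
  have hinner : HasDerivAt (fun s => (s - a ^ 2) / (s + a ^ 2))
      ((1 * (s + a ^ 2) - (s - a ^ 2) * 1) / (s + a ^ 2) ^ 2) s :=
    ((hasDerivAt_id s).sub_const _).div ((hasDerivAt_id s).add_const _) hsa.ne'
  have ha2 : 0 < a ^ 2 := by positivity
  have hne_one : (s - a ^ 2) / (s + a ^ 2) ≠ 1 := by
    rw [Ne, div_eq_one_iff_eq hsa.ne']; intro h; linarith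
  have hne_neg_one : (s - a ^ 2) / (s + a ^ 2) ≠ -1 := by
    rw [Ne, div_eq_iff hsa.ne']; intro h; linarith
  refine ((hasDerivAt_arccos hne_neg_one hne_one).comp s hinner).congr_deriv ?_
  have hsqrt : √(1 - ((s - a ^ 2) / (s + a ^ 2)) ^ 2) = 2 * √s * |a| / (s + a ^ 2) := by
    rw [show 1 - ((s - a ^ 2) / (s + a ^ 2)) ^ 2 = (2 * √s * |a| / (s + a ^ 2)) ^ 2 by
      rw [div_pow, div_pow, mul_pow, mul_pow, sq_sqrt hs.le, sq_abs]; field_simp; ring]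
    exact sqrt_sq (by positivity)
  have hs' := sqrt_pos.2 hs
  rw [hsqrt]
  field_simp
  rw [sq_abs]
  ring

lemma abs_div_sqrt_mul_add_sq_le {s : ℝ} (hs : 0 < s) (a : ℝ) :
    |a| / (√s * (s + a ^ 2)) ≤ 1 / (2 * s) := by
  have hsq := sqrt_pos.2 hs
  rw [div_le_div_iff₀ (by positivity) (by positivity), ← sq_abs a]
  nlinarith [mul_nonneg hsq.le (sq_nonneg (√s - |a|)), sq_sqrt hs.le]

lemma tan_div_add_tan_sq_eq (t x : ℝ) :
    tan x / (t + tan x ^ 2) = sin x * cos x / (t * cos x ^ 2 + sin x ^ 2) := by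
  rcases eq_or_ne (cos x) 0 with hc | hc
  · simp [tan_eq_sin_div_cos, hc]
  rw [tan_eq_sin_div_cos, div_pow, ← mul_div_mul_right _ _ (pow_ne_zero 2 hc)]
  field_simp

lemma integral_tan_div_add_tan_sq {t : ℝ} (ht : 0 < t) (ht1 : t ≠ 1) :
    ∫ x in (0:ℝ)..(π / 2), tan x / (t + tan x ^ 2) = -log t / (2 * (1 - t)) := by
  have hpos : ∀ x, 0 < t * cos x ^ 2 + sin x ^ 2 := fun x => by
    rcases le_total t 1 with h | h <;>
      nlinarith [sin_sq_add_cos_sq x, sq_nonneg (cos x), sq_nonneg (sin x)]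
  have hderiv : ∀ x, HasDerivAt (fun x => log (t * cos x ^ 2 + sin x ^ 2) / (2 * (1 - t)))
      (sin x * cos x / (t * cos x ^ 2 + sin x ^ 2)) x := by
    intro x
    have hq : HasDerivAt (fun x => t * cos x ^ 2 + sin x ^ 2)
        (t * (2 * cos x ^ 1 * -sin x) + 2 * sin x ^ 1 * cos x) x :=
      (((hasDerivAt_cos x).pow 2).const_mul t).add ((hasDerivAt_sin x).pow 2)
    refine ((hq.log (hpos x).ne').div_const _).congr_deriv ?_
    have := (hpos x).ne'
    have : 1 - t ≠ 0 := sub_ne_zero.2 ht1.symm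
    field_simp
    ring
  have hcont : Continuous fun x => sin x * cos x / (t * cos x ^ 2 + sin x ^ 2) :=
    by fun_prop (disch := exact fun x => (hpos x).ne')
  simp_rw [tan_div_add_tan_sq_eq]
  rw [intervalIntegral.integral_eq_sub_of_hasDerivAt (fun x _ => hderiv x)
    (hcont.intervalIntegrable _ _)]
  simp [neg_div]

lemma hasDerivAt_integral_arccos_sub_sq_div_add_sq {f : ℝ → ℝ} (hf : Measurable f) (a b : ℝ)
    {t : ℝ} (ht : 0 < t) :
    HasDerivAt (fun s => ∫ x in a..b, arccos ((s - f x ^ 2) / (s + f x ^ 2)))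
      (∫ x in a..b, -|f x| / (√t * (t + f x ^ 2))) t := by
  have hmeas : ∀ s, Measurable fun x => arccos ((s - f x ^ 2) / (s + f x ^ 2)) := fun s => by
    fun_prop
  have hF_int : IntervalIntegrable (fun x => arccos ((t - f x ^ 2) / (t + f x ^ 2))) volume a b :=
    intervalIntegrable_const (c := π) |>.mono_fun' (hmeas t).aestronglyMeasurable.restrict
      (.of_forall fun x => (norm_of_nonneg (arccos_nonneg _)).trans_le (arccos_le_pi _))
  have hbound : ∀ s ∈ Set.Ioi (t / 2), ∀ x, ‖-|f x| / (√s * (s + f x ^ 2))‖ ≤ 1 / t :=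
    fun s hs x => by
      have hs0 : 0 < s := by linarith [Set.mem_Ioi.1 hs]
      rw [neg_div, norm_neg, norm_of_nonneg (by positivity)]
      refine (abs_div_sqrt_mul_add_sq_le hs0 _).trans ?_
      rw [div_le_div_iff₀ (by positivity) ht]
      linarith [Set.mem_Ioi.1 hs]
  exact (intervalIntegral.hasDerivAt_integral_of_dominated_loc_of_deriv_le
    (F' := fun s x => -|f x| / (√s * (s + f x ^ 2))) (Ioi_mem_nhds (half_lt_self ht))
    (.of_forall fun s => (hmeas s).aestronglyMeasurable) hF_int
    (Measurable.aestronglyMeasurable <| by fun_prop)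
    (.of_forall fun x _ s hs => hbound s hs x) (intervalIntegrable_const (μ := volume))
    (.of_forall fun x _ s hs =>
      hasDerivAt_arccos_sub_sq_div_add_sq (by linarith [Set.mem_Ioi.1 hs]) (f x))).2

lemma integral_neg_abs_tan_div {t : ℝ} (ht : 0 < t) (ht1 : t ≠ 1) :
    ∫ x in (0:ℝ)..(π / 2), -|tan x| / (√t * (t + tan x ^ 2)) = log t / (2 * √t * (1 - t)) := by
  have htan_nonneg : ∀ x ∈ Set.uIcc 0 (π / 2), 0 ≤ tan x := fun x hx => by
    rw [Set.uIcc_of_le (by positivity)] at hx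
    exact tan_nonneg_of_nonneg_of_le_pi_div_two hx.1 hx.2
  calc ∫ x in (0:ℝ)..(π / 2), -|tan x| / (√t * (t + tan x ^ 2))
      = ∫ x in (0:ℝ)..(π / 2), -(tan x / (t + tan x ^ 2)) / √t :=
        intervalIntegral.integral_congr fun x hx => by
          rw [abs_of_nonneg (htan_nonneg x hx), neg_div, neg_div, div_div, mul_comm]
    _ = -(∫ x in (0:ℝ)..(π / 2), tan x / (t + tan x ^ 2)) / √t := by
        rw [intervalIntegral.integral_div, intervalIntegral.integral_neg]
    _ = log t / (2 * √t * (1 - t)) := by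
        rw [integral_tan_div_add_tan_sq ht ht1]
        simp only [neg_div, neg_neg, div_div, mul_right_comm]

theorem stmt_4 :
    ∀ t ∈ Set.Ioo (0:ℝ) 1,
      HasDerivAt (fun s : ℝ => ∫ x in (0:ℝ)..(π / 2), arccos ((s - tan x ^ 2) / (s + tan x ^ 2)))
        (Real.log t / (2 * Real.sqrt t * (1 - t))) t := by
  rintro t ⟨ht0, ht1⟩
  rw [← integral_neg_abs_tan_div ht0 ht1.ne]
  exact hasDerivAt_integral_arccos_sub_sq_div_add_sq measurable_tan 0 (π / 2) ht0
end

section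
/- ∫₀¹ log t / (2√t(1 - t)) dt = -π²/4. -/
/-!
Expanding `1 / (1 - t) = ∑ tⁿ`, the integrand is the sum of the nonpositive functions
`log t · t ^ (n + 1/2 - 1) / 2`, so the integral may be computed term by term. Since
`t ^ c log t / c - t ^ c / c²` is an antiderivative of `log t · t ^ (c - 1)` vanishing at `0`,
`∫₀¹ log t · t ^ (c - 1) dt = -1 / c²`, and the `n`-th term contributes `-2 / (2n + 1)²`.
Summing, with `∑ 1 / (2n + 1)² = π² / 8` (the odd part of `ζ(2) = π² / 6`), gives `-π² / 4`.
-/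

open Real MeasureTheory Set Filter Topology

lemma hasSum_one_div_two_mul_add_one_sq :
    HasSum (fun n : ℕ => 1 / (2 * n + 1 : ℝ) ^ 2) (π ^ 2 / 8) := by
  set f : ℕ → ℝ := fun n => 1 / (n : ℝ) ^ 2
  have heven : HasSum (fun n => f (2 * n)) (π ^ 2 / 6 / 4) := by
    have : (fun n => f (2 * n)) = fun n : ℕ => 1 / (n : ℝ) ^ 2 / 4 := by
      ext n; simp only [f]; push_cast; ring
    exact this ▸ hasSum_zeta_two.div_const 4
  obtain ⟨s, hodd⟩ : Summable (fun n => f (2 * n + 1)) :=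
    hasSum_zeta_two.summable.comp_injective fun a b h => by omega
  obtain rfl : s = π ^ 2 / 8 := by
    linarith [(heven.even_add_odd hodd).unique hasSum_zeta_two]
  convert hodd using 2 with n
  simp only [f]; push_cast; rfl

lemma continuousOn_rpow_mul_log {c : ℝ} (hc : 0 < c) :
    ContinuousOn (fun t : ℝ => t ^ c * log t) (Ici 0) := by
  intro x hx
  rcases (mem_Ici.mp hx).eq_or_lt with rfl | hx
  · rw [← continuousWithinAt_Ioi_iff_Ici, ContinuousWithinAt, zero_rpow hc.ne', zero_mul]
    simpa only [mul_comm] using tendsto_log_mul_rpow_nhdsGT_zero hc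
  · exact ((continuousAt_rpow_const x c (.inl hx.ne')).mul
      (continuousAt_log hx.ne')).continuousWithinAt

lemma hasDerivAt_rpow_mul_log_div_sub {c x : ℝ} (hc : c ≠ 0) (hx : 0 < x) :
    HasDerivAt (fun t : ℝ => t ^ c * log t / c - t ^ c / c ^ 2) (log x * x ^ (c - 1)) x := by
  have hpow := hasDerivAt_rpow_const (p := c) (.inl hx.ne')
  refine (((hpow.mul (hasDerivAt_log hx.ne')).div_const c).sub
    (hpow.div_const (c ^ 2))).congr_deriv ?_
  rw [rpow_sub_one hx.ne']
  field_simp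
  ring

lemma log_mul_rpow_nonpos {t : ℝ} (c : ℝ) (ht₀ : 0 ≤ t) (ht₁ : t ≤ 1) : log t * t ^ c ≤ 0 :=
  mul_nonpos_of_nonpos_of_nonneg (log_nonpos ht₀ ht₁) (rpow_nonneg ht₀ c)

lemma continuousOn_rpow_mul_log_div_sub {c : ℝ} (hc : 0 < c) :
    ContinuousOn (fun t : ℝ => t ^ c * log t / c - t ^ c / c ^ 2) (Icc 0 1) :=
  (((continuousOn_rpow_mul_log hc).div_const c).sub
    ((continuousOn_id.rpow_const fun _ _ => .inr hc.le).div_const (c ^ 2))).mono Icc_subset_Ici_self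

lemma integrableOn_log_mul_rpow_sub_one {c : ℝ} (hc : 0 < c) :
    IntegrableOn (fun t : ℝ => log t * t ^ (c - 1)) (Ioc 0 1) := by
  have := intervalIntegral.integrableOn_deriv_of_nonneg
    (continuousOn_rpow_mul_log_div_sub hc).neg
    (fun x hx => (hasDerivAt_rpow_mul_log_div_sub hc.ne' hx.1).neg)
    (fun x hx => neg_nonneg.mpr <| log_mul_rpow_nonpos _ hx.1.le hx.2.le)
  simpa using this.neg

lemma integral_log_mul_rpow_sub_one {c : ℝ} (hc : 0 < c) :
    ∫ t in (0 : ℝ)..1, log t * t ^ (c - 1) = -1 / c ^ 2 := by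
  rw [intervalIntegral.integral_eq_sub_of_hasDerivAt_of_le zero_le_one
    (continuousOn_rpow_mul_log_div_sub hc)
    (fun x hx => hasDerivAt_rpow_mul_log_div_sub hc.ne' hx.1)
    ((intervalIntegrable_iff_integrableOn_Ioc_of_le zero_le_one).mpr
      (integrableOn_log_mul_rpow_sub_one hc))]
  simp [zero_rpow hc.ne']
  ring

lemma integral_tsum_of_nonpos {ι α : Type*} [Countable ι] [MeasurableSpace α] {μ : Measure α}
    {F : ι → α → ℝ} {s : ℝ} (hF_int : ∀ i, Integrable (F i) μ) (hF_nonpos : ∀ i, F i ≤ᵐ[μ] 0)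
    (hs : HasSum (fun i => ∫ a, F i a ∂μ) s) :
    ∫ a, ∑' i, F i a ∂μ = s := by
  have hnorm (i : ι) : ∫ a, ‖F i a‖ ∂μ = -∫ a, F i a ∂μ := by
    rw [← integral_neg]
    exact integral_congr_ae <| (hF_nonpos i).mono fun a ha => abs_of_nonpos ha
  refine (hs.unique (hasSum_integral_of_summable_integral_norm hF_int ?_)).symm
  simpa only [hnorm] using hs.summable.neg

lemma hasSum_log_mul_rpow_div_two {t : ℝ} (ht : t ∈ Ioc 0 1) :
    HasSum (fun n : ℕ => log t * t ^ ((n + 1 / 2 : ℝ) - 1) / 2) (log t / (2 * √t * (1 - t))) := by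
  rcases ht.2.eq_or_lt with rfl | ht₁
  · simp
  have hterm (n : ℕ) : log t * t ^ ((n + 1 / 2 : ℝ) - 1) / 2 = log t / (2 * √t) * t ^ n := by
    rw [show (n + 1 / 2 : ℝ) - 1 = n + (-(1 / 2)) by ring, rpow_add ht.1, rpow_natCast,
      rpow_neg ht.1.le, sqrt_eq_rpow]
    ring
  simp only [hterm]
  rw [show log t / (2 * √t * (1 - t)) = log t / (2 * √t) * (1 - t)⁻¹ by field_simp]
  exact (hasSum_geometric_of_lt_one ht.1.le ht₁).mul_left _

theorem stmt_10 :
    ∫ t in (0:ℝ)..1, Real.log t / (2 * Real.sqrt t * (1 - t)) = -(π ^ 2) / 4 := by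
  have hc (n : ℕ) : 0 < (n + 1 / 2 : ℝ) := by positivity
  have hterm (n : ℕ) : ∫ t in Ioc 0 1, log t * t ^ ((n + 1 / 2 : ℝ) - 1) / 2 =
      -2 * (1 / (2 * n + 1) ^ 2) := by
    rw [integral_div, ← intervalIntegral.integral_of_le zero_le_one,
      integral_log_mul_rpow_sub_one (hc n)]
    field_simp
  rw [intervalIntegral.integral_of_le zero_le_one, setIntegral_congr_fun measurableSet_Ioc
    fun t ht => (hasSum_log_mul_rpow_div_two ht).tsum_eq.symm]
  refine integral_tsum_of_nonpos (fun n => (integrableOn_log_mul_rpow_sub_one (hc n)).div_const 2)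
    (fun n => (ae_restrict_iff' measurableSet_Ioc).mpr <| .of_forall fun t ht =>
      div_nonpos_of_nonpos_of_nonneg (log_mul_rpow_nonpos _ ht.1.le ht.2) zero_le_two) ?_
  simp only [hterm]
  rw [show -π ^ 2 / 4 = -2 * (π ^ 2 / 8) by ring]
  exact hasSum_one_div_two_mul_add_one_sq.mul_left (-2)
end
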